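/- Fix an integer c ≥ 2 and let G be a finite double tree with no c-balanced double tree decomposition that has the minimum number of vertices among all such double trees. If v is a vertex of G of degree 2, then the two neighbours x and y of v are distinct, both x and y are big, and d_G(x) ≡ d_G(y) ≡ c + 1 (mod 2). -/

import Mathlib

/-- A multigraph without loops: edges `E` with an endpoint map into unordered
pairs of vertices, no edge being a loop. -/
structure Multigraph (V : Type*) (E : Type*) where
  ends : E → Sym2 V
  loopless : ∀ e, ¬ (ends e).IsDiag

namespace Multigraph

variable {V E : Type*}

/-- `a` and `b` are joined by an edge belonging to the edge set `S`. -/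
def Adj (G : Multigraph V E) (S : Set E) (a b : V) : Prop :=
  ∃ e ∈ S, G.ends e = s(a, b)

/-- Reachability in the spanning subgraph with edge set `S`. -/
def Reachable (G : Multigraph V E) (S : Set E) (a b : V) : Prop :=
  Relation.ReflTransGen (G.Adj S) a b

/-- The spanning subgraph with edge set `S` is connected. -/
def Connected (G : Multigraph V E) (S : Set E) : Prop :=
  ∀ a b : V, G.Reachable S a b

/-- The spanning subgraph with edge set `S` is acyclic: every edge of `S`
is a bridge of `S`. -/
def Acyclic (G : Multigraph V E) (S : Set E) : Prop :=
  ∀ e ∈ S, ∀ a b : V, G.ends e = s(a, b) → ¬ G.Reachable (S \ {e}) a b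

/-- `S` is the edge set of a spanning tree: connected and acyclic. -/
def IsSpanningTree (G : Multigraph V E) (S : Set E) : Prop :=
  G.Connected S ∧ G.Acyclic S

/-- The edges of `S` incident to `v`. -/
def incEdges (G : Multigraph V E) (S : Set E) (v : V) : Set E :=
  {e ∈ S | v ∈ G.ends e}

/-- The degree of `v` in the spanning subgraph with edge set `S`. -/
noncomputable def deg (G : Multigraph V E) (S : Set E) (v : V) : ℕ :=
  (G.incEdges S v).ncard

/-- `T1, T2` form a double tree decomposition of `G`: they partition the
edges of `G` and are both spanning trees. -/
def IsDTD (G : Multigraph V E) (T1 T2 : Set E) : Prop :=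
  T1 ∪ T2 = Set.univ ∧ Disjoint T1 T2 ∧ G.IsSpanningTree T1 ∧ G.IsSpanningTree T2

/-- `G` is a double tree: the edge-disjoint union of two spanning trees. -/
def IsDoubleTree (G : Multigraph V E) : Prop :=
  ∃ T1 T2, G.IsDTD T1 T2

/-- A decomposition into two spanning subgraphs is `c`-balanced if at each
vertex the two degrees differ by at most `c`. -/
def Balanced (G : Multigraph V E) (c : ℕ) (S1 S2 : Set E) : Prop :=
  ∀ v : V, |(G.deg S1 v : ℤ) - (G.deg S2 v : ℤ)| ≤ (c : ℤ)

end Multigraph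

namespace Multigraph

variable {V E : Type*}

/-- `G` admits no `c`-balanced double tree decomposition. -/
def NoBalancedDTD (c : ℕ) (G : Multigraph V E) : Prop :=
  ¬ ∃ T1 T2 : Set E, G.IsDTD T1 T2 ∧ G.Balanced c T1 T2

/-- `v` is big: its degree exceeds `c + 2`. -/
def Big (G : Multigraph V E) (c : ℕ) (v : V) : Prop :=
  c + 2 < G.deg Set.univ v

/-- `v` is small: its degree is at most `c + 2`. -/
def Small (G : Multigraph V E) (c : ℕ) (v : V) : Prop :=
  G.deg Set.univ v ≤ c + 2

/-- `u` and `z` are joined by a double edge. -/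
def DoubleEdge (G : Multigraph V E) (u z : V) : Prop :=
  ∃ e1 e2 : E, e1 ≠ e2 ∧ G.ends e1 = s(u, z) ∧ G.ends e2 = s(u, z)

/-- `u` is a bad 3-vertex: it has degree 3, a small neighbour, and is joined
to a big vertex by a double edge. -/
def Bad3 (G : Multigraph V E) (c : ℕ) (u : V) : Prop :=
  G.deg Set.univ u = 3 ∧
  (∃ w, G.Adj Set.univ u w ∧ G.Small c w) ∧
  (∃ z, G.DoubleEdge u z ∧ G.Big c z)

/-- `u` is a poor 3-vertex: it has degree 3 and three distinct neighbours,
two big and one small. -/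
def Poor3 (G : Multigraph V E) (c : ℕ) (u : V) : Prop :=
  G.deg Set.univ u = 3 ∧
  ∃ x y s : V, x ≠ y ∧ x ≠ s ∧ y ≠ s ∧
    G.Adj Set.univ u x ∧ G.Adj Set.univ u y ∧ G.Adj Set.univ u s ∧
    G.Big c x ∧ G.Big c y ∧ G.Small c s

end Multigraph

/-!
Deleting `v` together with its two edges leaves a double tree on fewer vertices (in every
decomposition of `G` the vertex `v` is a leaf of both trees), so by minimality it has a
`c`-balanced decomposition `S₁, S₂`. Putting `v` back as a leaf of both trees, in either of
the two ways, gives decompositions of `G`; they must be unbalanced, and they differ from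
`S₁, S₂` only at `x` and `y`, by `±1`. For `x ≠ y` and `c ≥ 1` this forces
`|d_{S₁}(x) - d_{S₂}(x)| = c`, while `d_{S₁}(x), d_{S₂}(x) ≥ 1` because `S₁, S₂` span `G - v`.
Since `d_G(x) = d_{S₁}(x) + d_{S₂}(x) + 1`, the vertex `x` is big and
`d_G(x) ≡ c + 1 (mod 2)`; if `x = y`, both re-insertions are balanced outright.
-/

namespace Multigraph

variable {V E V₂ E₂ : Type*} {G : Multigraph V E}

lemma ne_of_ends {e : E} {a b : V} (h : G.ends e = s(a, b)) : a ≠ b := by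
  rintro rfl
  exact G.loopless e (h ▸ Sym2.mk_isDiag_iff.mpr rfl)

lemma Adj.symm {S : Set E} {a b : V} (h : G.Adj S a b) : G.Adj S b a := by
  obtain ⟨e, he, hab⟩ := h
  exact ⟨e, he, hab.trans Sym2.eq_swap⟩

lemma Reachable.symm {S : Set E} {a b : V} (h : G.Reachable S a b) : G.Reachable S b a :=
  haveI : Std.Symm (G.Adj S) := ⟨fun _ _ => Adj.symm⟩
  Std.Symm.symm (r := Relation.ReflTransGen (G.Adj S)) a b h

lemma Reachable.mono {S S' : Set E} (hS : S ⊆ S') {a b : V} (h : G.Reachable S a b) :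
    G.Reachable S' a b :=
  Relation.ReflTransGen.mono (fun _ _ ⟨e, he, hab⟩ => ⟨e, hS he, hab⟩) _ _ h

lemma Reachable.exists_mem_ends {S : Set E} {a b : V} (h : G.Reachable S a b) (hab : a ≠ b) :
    ∃ e ∈ S, a ∈ G.ends e := by
  obtain rfl | ⟨w, ⟨e, he, hends⟩, -⟩ := h.cases_head
  · exact absurd rfl hab
  · exact ⟨e, he, hends ▸ Sym2.mem_mk_left a w⟩

lemma one_le_deg [Finite E] {S : Set E} {a b : V} (h : G.Reachable S a b) (hab : a ≠ b) :
    1 ≤ G.deg S a := by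
  obtain ⟨e, he, hae⟩ := h.exists_mem_ends hab
  exact (Set.ncard_pos).mpr ⟨e, he, hae⟩

lemma deg_union [Finite E] {S T : Set E} (h : Disjoint S T) (u : V) :
    G.deg (S ∪ T) u = G.deg S u + G.deg T u := by
  have : G.incEdges (S ∪ T) u = G.incEdges S u ∪ G.incEdges T u := by
    ext e; simp only [incEdges, Set.mem_union, Set.mem_ofPred_eq, or_and_right]
  rw [deg, this, Set.ncard_union_eq (h.mono (fun _ h => h.1) (fun _ h => h.1))]
  rfl

lemma deg_insert_of_mem [Finite E] {S : Set E} {e : E} {u : V} (he : e ∉ S)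
    (hu : u ∈ G.ends e) : G.deg (insert e S) u = G.deg S u + 1 := by
  have : G.incEdges (insert e S) u = insert e (G.incEdges S u) := by
    ext f
    simp only [incEdges, Set.mem_insert_iff, Set.mem_ofPred_eq]
    constructor
    · rintro ⟨rfl | hf, hfu⟩ <;> simp_all
    · rintro (rfl | ⟨hf, hfu⟩) <;> simp_all
  rw [deg, this, Set.ncard_insert_of_notMem (fun h => he h.1)]
  rfl

lemma deg_insert_of_notMem {S : Set E} {e : E} {u : V} (hu : u ∉ G.ends e) :
    G.deg (insert e S) u = G.deg S u := by
  have : G.incEdges (insert e S) u = G.incEdges S u := by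
    ext f
    simp only [incEdges, Set.mem_insert_iff, Set.mem_ofPred_eq]
    constructor
    · rintro ⟨rfl | hf, hfu⟩ <;> simp_all
    · rintro ⟨hf, hfu⟩
      exact ⟨Or.inr hf, hfu⟩
  rw [deg, this]
  rfl

lemma IsDTD.symm {T1 T2 : Set E} (h : G.IsDTD T1 T2) : G.IsDTD T2 T1 :=
  ⟨Set.union_comm T1 T2 ▸ h.1, h.2.1.symm, h.2.2.2, h.2.2.1⟩

lemma IsDTD.deg_add_deg [Finite E] {T1 T2 : Set E} (h : G.IsDTD T1 T2) (u : V) :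
    G.deg T1 u + G.deg T2 u = G.deg Set.univ u := by
  rw [← deg_union h.2.1, h.1]

def IsHom (f : V → V₂) (g : E → E₂) (G : Multigraph V E) (G₂ : Multigraph V₂ E₂) :
    Prop :=
  ∀ e, G₂.ends (g e) = (G.ends e).map f

namespace IsHom

variable {G₂ : Multigraph V₂ E₂}

section

variable {f : V → V₂} {g : E → E₂}

lemma ends_eq_iff (hom : IsHom f g G G₂) (hf : f.Injective) {e : E} {a b : V} :
    G₂.ends (g e) = s(f a, f b) ↔ G.ends e = s(a, b) := by
  rw [hom, ← Sym2.map_mk, (Sym2.map.injective hf).eq_iff]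

lemma reachable (hom : IsHom f g G G₂) {S : Set E} {a b : V} (h : G.Reachable S a b) :
    G₂.Reachable (g '' S) (f a) (f b) :=
  Relation.ReflTransGen.lift f (fun _ _ ⟨e, he, hab⟩ =>
    ⟨g e, Set.mem_image_of_mem g he, by rw [hom, hab, Sym2.map_mk]⟩) _ _ h

lemma deg_image [Finite E] (hom : IsHom f g G G₂) (hf : f.Injective) (hg : g.Injective)
    (S : Set E) (u : V) :
    G₂.deg (g '' S) (f u) = G.deg S u := by
  have : G₂.incEdges (g '' S) (f u) = g '' G.incEdges S u := by
    ext e₂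
    simp only [incEdges, Set.mem_ofPred_eq, Set.mem_image]
    constructor
    · rintro ⟨⟨e, he, rfl⟩, hu⟩
      rw [hom, Sym2.mem_map] at hu
      obtain ⟨w, hw, hwu⟩ := hu
      exact ⟨e, ⟨he, hf hwu ▸ hw⟩, rfl⟩
    · rintro ⟨e, ⟨he, hu⟩, rfl⟩
      exact ⟨⟨e, he, rfl⟩, by rw [hom]; exact Sym2.mem_map.mpr ⟨u, hu, rfl⟩⟩
  rw [deg, this, Set.ncard_image_of_injective _ hg]
  rfl

end

variable {f : V ≃ V₂} {g : E ≃ E₂}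

lemma symm (hom : IsHom f g G G₂) : IsHom f.symm g.symm G₂ G := by
  intro e
  obtain ⟨e, rfl⟩ := g.surjective e
  rw [hom, Sym2.map_map, g.symm_apply_apply, f.symm_comp_self, Sym2.map_id, id]

lemma isSpanningTree (hom : IsHom f g G G₂) {T : Set E} (hT : G.IsSpanningTree T) :
    G₂.IsSpanningTree (g '' T) := by
  refine ⟨fun a b => by simpa using hom.reachable (hT.1 (f.symm a) (f.symm b)), ?_⟩
  rintro _ ⟨e, he, rfl⟩ a b hab hr
  refine hT.2 e he (f.symm a) (f.symm b) ?_ ?_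
  · simpa [hab] using hom.symm (g e)
  · simpa [Set.image_sdiff g.injective, Set.image_sdiff g.symm.injective] using
      hom.symm.reachable hr

lemma isDTD (hom : IsHom f g G G₂) {T1 T2 : Set E} (h : G.IsDTD T1 T2) :
    G₂.IsDTD (g '' T1) (g '' T2) :=
  ⟨by rw [← Set.image_union, h.1, Set.image_univ_of_surjective g.surjective],
    (Set.disjoint_image_iff g.injective).mpr h.2.1, hom.isSpanningTree h.2.2.1,
    hom.isSpanningTree h.2.2.2⟩

lemma balanced [Finite E] (hom : IsHom f g G G₂) {c : ℕ} {T1 T2 : Set E}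
    (h : G.Balanced c T1 T2) :
    G₂.Balanced c (g '' T1) (g '' T2) := by
  intro u
  obtain ⟨u, rfl⟩ := f.surjective u
  rw [hom.deg_image f.injective g.injective, hom.deg_image f.injective g.injective]
  exact h u

end IsHom

def mapEquiv (G : Multigraph V E) (f : V ≃ V₂) (g : E ≃ E₂) : Multigraph V₂ E₂ where
  ends e := (G.ends (g.symm e)).map f
  loopless e := by
    rw [Sym2.isDiag_map f.injective]
    exact G.loopless _

lemma isHom_mapEquiv (G : Multigraph V E) (f : V ≃ V₂) (g : E ≃ E₂) :
    IsHom f g G (G.mapEquiv f g) := fun e => by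
  simp [mapEquiv]

lemma exists_balanced_of_card_lt {c n : ℕ}
    (hmin : ∀ (n' m' : ℕ) (G' : Multigraph (Fin n') (Fin m')),
      G'.IsDoubleTree → G'.NoBalancedDTD c → n ≤ n')
    [Fintype V] [Fintype E] (hG : G.IsDoubleTree) (hcard : Fintype.card V < n) :
    ∃ T1 T2, G.IsDTD T1 T2 ∧ G.Balanced c T1 T2 := by
  have hom := isHom_mapEquiv G (Fintype.equivFin V) (Fintype.equivFin E)
  obtain ⟨T1, T2, hT⟩ := hG
  by_contra hno
  refine (hmin _ _ _ ⟨_, _, hom.isDTD hT⟩ ?_).not_gt hcard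
  rintro ⟨T1', T2', hT', hB'⟩
  exact hno ⟨_, _, hom.symm.isDTD hT', hom.symm.balanced hB'⟩

def deleteVertex (G : Multigraph V E) (v : V) :
    Multigraph {u // u ≠ v} {e // v ∉ G.ends e} where
  ends e := (G.ends e.1).attachWith fun _ hu huv => e.2 (huv ▸ hu)
  loopless e h := G.loopless e.1 (by simpa using h.map (f := Subtype.val))

section DeleteVertex

variable {v : V}

lemma isHom_val_deleteVertex : IsHom Subtype.val Subtype.val (G.deleteVertex v) G :=
  fun _ => (Sym2.attachWith_map_subtypeVal _).symm

lemma notMem_ends_of_mem_image_val {S : Set {e // v ∉ G.ends e}} {e : E}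
    (he : e ∈ Subtype.val '' S) : v ∉ G.ends e := by
  obtain ⟨e, -, rfl⟩ := he
  exact e.2

lemma deg_image_val [Finite E] (S : Set {e // v ∉ G.ends e}) (u : {u // u ≠ v}) :
    G.deg (Subtype.val '' S) u = (G.deleteVertex v).deg S u :=
  isHom_val_deleteVertex.deg_image Subtype.val_injective Subtype.val_injective S u

lemma deg_image_val_self (S : Set {e // v ∉ G.ends e}) : G.deg (Subtype.val '' S) v = 0 := by
  have : G.incEdges (Subtype.val '' S) v = ∅ :=
    Set.eq_empty_of_forall_notMem fun _ he => notMem_ends_of_mem_image_val he.1 he.2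
  rw [deg, this, Set.ncard_empty]

lemma Balanced.image_val [Finite E] {c : ℕ} {S T : Set {e // v ∉ G.ends e}}
    (h : (G.deleteVertex v).Balanced c S T) :
    G.Balanced c (Subtype.val '' S) (Subtype.val '' T) := by
  intro u
  by_cases hu : u = v
  · subst hu
    simp [deg_image_val_self]
  · rw [show u = ((⟨u, hu⟩ : {u // u ≠ v}) : V) from rfl, deg_image_val, deg_image_val]
    exact h _

/-- The retraction `v ↦ x₀` maps `T`-paths to paths avoiding `v`, since it collapses the
only edge of `T` at `v`. -/
lemma Reachable.deleteVertex {T : Set E} {e₀ : E} {x₀ : V} (h₀ : G.ends e₀ = s(v, x₀))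
    (hleaf : ∀ e ∈ T, v ∈ G.ends e → e = e₀) {a b : {u // u ≠ v}}
    (h : G.Reachable T a b) : (G.deleteVertex v).Reachable (Subtype.val ⁻¹' T) a b := by
  classical
  have hx₀ : x₀ ≠ v := (ne_of_ends h₀).symm
  let r : V → {u // u ≠ v} := fun u => if hu : u = v then ⟨x₀, hx₀⟩ else ⟨u, hu⟩
  have hr : ∀ u : {u // u ≠ v}, r u = u := fun u => dif_neg u.2
  rw [← hr a, ← hr b]
  refine Relation.ReflTransGen.lift' r (fun p q ⟨e, he, hpq⟩ => ?_) _ _ h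
  by_cases hve : v ∈ G.ends e
  · have hrpq : r p = r q := by
      rw [hleaf e he hve, h₀] at hpq
      rcases Sym2.eq_iff.mp hpq with ⟨rfl, rfl⟩ | ⟨rfl, rfl⟩ <;> simp [r, hx₀]
    show Relation.ReflTransGen _ (r p) (r q)
    rw [hrpq]
  · have hp : p ≠ v := by rintro rfl; exact hve (hpq ▸ Sym2.mem_mk_left _ _)
    have hq : q ≠ v := by rintro rfl; exact hve (hpq ▸ Sym2.mem_mk_right _ _)
    refine .single ⟨⟨e, hve⟩, he, ?_⟩
    simp only [r, dif_neg hp, dif_neg hq]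
    exact (isHom_val_deleteVertex.ends_eq_iff Subtype.val_injective).mp hpq

lemma IsSpanningTree.deleteVertex {T : Set E} {e₀ : E} {x₀ : V} (hT : G.IsSpanningTree T)
    (h₀ : G.ends e₀ = s(v, x₀)) (hleaf : ∀ e ∈ T, v ∈ G.ends e → e = e₀) :
    (G.deleteVertex v).IsSpanningTree (Subtype.val ⁻¹' T) := by
  refine ⟨fun a b => (hT.1 a b).deleteVertex h₀ hleaf, ?_⟩
  intro e he a b hab hr
  refine hT.2 e he a b ((isHom_val_deleteVertex.ends_eq_iff Subtype.val_injective).mpr hab) ?_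
  refine (isHom_val_deleteVertex.reachable hr).mono ?_
  rintro _ ⟨e', ⟨he'T, he'e⟩, rfl⟩
  exact ⟨he'T, fun h => he'e (Subtype.val_injective h)⟩

lemma Connected.insert_image_val {S : Set {e // v ∉ G.ends e}}
    (hS : (G.deleteVertex v).Connected S) {a : E} {x : V} (ha : G.ends a = s(v, x)) :
    G.Connected (insert a (Subtype.val '' S)) := by
  have hfrom_v : ∀ q, G.Reachable (insert a (Subtype.val '' S)) v q := by
    intro q
    by_cases hq : q = v
    · subst hq
      exact .refl
    · refine Relation.ReflTransGen.head ⟨a, Set.mem_insert _ _, ha⟩ ?_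
      exact (isHom_val_deleteVertex.reachable (hS ⟨x, (ne_of_ends ha).symm⟩ ⟨q, hq⟩)).mono
        (Set.subset_insert _ _)
  exact fun p q => (hfrom_v p).symm.trans (hfrom_v q)

lemma Acyclic.insert_image_val {S : Set {e // v ∉ G.ends e}}
    (hS : (G.deleteVertex v).Acyclic S) {a : E} {x : V} (ha : G.ends a = s(v, x)) :
    G.Acyclic (insert a (Subtype.val '' S)) := by
  have hnot : ∀ f ∈ insert a (Subtype.val '' S) \ {a}, v ∉ G.ends f :=
    fun f hf => notMem_ends_of_mem_image_val (hf.1.resolve_left hf.2)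
  rintro e (rfl | ⟨e, he, rfl⟩) p q hpq hr
  · rw [ha] at hpq
    obtain ⟨f, hf, hvf⟩ : ∃ f ∈ insert e (Subtype.val '' S) \ {e}, v ∈ G.ends f := by
      rcases Sym2.eq_iff.mp hpq with ⟨hp, hq⟩ | ⟨hp, hq⟩
      · rw [← hp, ← hq] at hr
        exact hr.exists_mem_ends (ne_of_ends ha)
      · rw [← hp, ← hq] at hr
        exact hr.symm.exists_mem_ends (ne_of_ends ha)
    exact hnot f hf hvf
  · have hp : p ≠ v := fun h => e.2 (h ▸ hpq ▸ Sym2.mem_mk_left _ _)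
    have hq : q ≠ v := fun h => e.2 (h ▸ hpq ▸ Sym2.mem_mk_right _ _)
    have hdown := Reachable.deleteVertex (a := ⟨p, hp⟩) (b := ⟨q, hq⟩) ha
      (fun f hf hvf => by_contra fun hfa => hnot f ⟨hf.1, hfa⟩ hvf) hr
    refine hS e he ⟨p, hp⟩ ⟨q, hq⟩
      ((isHom_val_deleteVertex.ends_eq_iff Subtype.val_injective).mp hpq) ?_
    convert hdown using 1
    ext f
    simp only [Set.mem_sdiff, Set.mem_singleton_iff, Set.mem_preimage, Set.mem_insert_iff,
      Subtype.val_injective.mem_set_image, Subtype.val_injective.eq_iff]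
    have hfa : f.1 ≠ a := fun hfa => f.2 (hfa ▸ ha ▸ Sym2.mem_mk_left v x)
    tauto

lemma IsSpanningTree.insert_image_val {S : Set {e // v ∉ G.ends e}}
    (hS : (G.deleteVertex v).IsSpanningTree S) {a : E} {x : V} (ha : G.ends a = s(v, x)) :
    G.IsSpanningTree (insert a (Subtype.val '' S)) :=
  ⟨hS.1.insert_image_val ha, hS.2.insert_image_val ha⟩

lemma IsDTD.deleteVertex {T1 T2 : Set E} {a b : E} {x y : V} (hT : G.IsDTD T1 T2)
    (ha : G.ends a = s(v, x)) (hb : G.ends b = s(v, y)) (haT : a ∈ T1) (hbT : b ∈ T2)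
    (hv : ∀ e, v ∈ G.ends e → e = a ∨ e = b) :
    (G.deleteVertex v).IsDTD (Subtype.val ⁻¹' T1) (Subtype.val ⁻¹' T2) := by
  have hleaf1 : ∀ e ∈ T1, v ∈ G.ends e → e = a := fun e he hve =>
    (hv e hve).resolve_right fun h => Set.disjoint_left.mp hT.2.1 he (h ▸ hbT)
  have hleaf2 : ∀ e ∈ T2, v ∈ G.ends e → e = b := fun e he hve =>
    (hv e hve).resolve_left fun h => Set.disjoint_left.mp hT.2.1 (h ▸ haT) he
  exact ⟨by rw [← Set.preimage_union, hT.1, Set.preimage_univ], hT.2.1.preimage _,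
    hT.2.2.1.deleteVertex ha hleaf1, hT.2.2.2.deleteVertex hb hleaf2⟩

lemma IsDTD.insert_image_val {S1 S2 : Set {e // v ∉ G.ends e}}
    (hS : (G.deleteVertex v).IsDTD S1 S2) {a b : E} {x y : V} (hab : a ≠ b)
    (hv : ∀ e, v ∈ G.ends e → e = a ∨ e = b) (ha : G.ends a = s(v, x))
    (hb : G.ends b = s(v, y)) :
    G.IsDTD (insert a (Subtype.val '' S1)) (insert b (Subtype.val '' S2)) := by
  have hva : v ∈ G.ends a := ha ▸ Sym2.mem_mk_left v x
  have hvb : v ∈ G.ends b := hb ▸ Sym2.mem_mk_left v y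
  refine ⟨?_, ?_, hS.2.2.1.insert_image_val ha, hS.2.2.2.insert_image_val hb⟩
  · refine Set.eq_univ_of_forall fun e => ?_
    by_cases hve : v ∈ G.ends e
    · rcases hv e hve with rfl | rfl
      exacts [.inl (Set.mem_insert _ _), .inr (Set.mem_insert _ _)]
    · have : (⟨e, hve⟩ : {e // v ∉ G.ends e}) ∈ S1 ∪ S2 := hS.1 ▸ trivial
      rcases this with h | h
      exacts [.inl (.inr ⟨_, h, rfl⟩), .inr (.inr ⟨_, h, rfl⟩)]
  · rw [Set.disjoint_insert_left, Set.disjoint_insert_right, Set.mem_insert_iff]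
    exact ⟨fun h => h.elim hab fun h => notMem_ends_of_mem_image_val h hva,
      fun h => notMem_ends_of_mem_image_val h hvb,
      (Set.disjoint_image_iff Subtype.val_injective).mpr hS.2.1⟩

end DeleteVertex

section TwoVertex

variable {v x y : V} {a b : E}

lemma eq_or_eq_of_deg_eq_two [Finite E] (hab : a ≠ b) (ha : G.ends a = s(v, x))
    (hb : G.ends b = s(v, y)) (hdeg : G.deg Set.univ v = 2) {e : E} (hve : v ∈ G.ends e) :
    e = a ∨ e = b := by
  have hsub : {a, b} ⊆ G.incEdges Set.univ v := by
    rintro _ (rfl | rfl)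
    exacts [⟨trivial, ha ▸ Sym2.mem_mk_left v x⟩, ⟨trivial, hb ▸ Sym2.mem_mk_left v y⟩]
  have hinc := Set.eq_of_subset_of_ncard_le hsub (by rw [Set.ncard_pair hab]; exact hdeg.le)
  have he : e ∈ G.incEdges Set.univ v := ⟨trivial, hve⟩
  simpa [← hinc] using he

lemma IsDoubleTree.exists_isDTD_mem_mem (hG : G.IsDoubleTree) (hvx : v ≠ x)
    (hv : ∀ e, v ∈ G.ends e → e = a ∨ e = b) :
    ∃ T1 T2, G.IsDTD T1 T2 ∧ a ∈ T1 ∧ b ∈ T2 := by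
  obtain ⟨T1, T2, hT⟩ := hG
  obtain ⟨e, he, hve⟩ := (hT.2.2.1.1 v x).exists_mem_ends hvx
  obtain ⟨e', he', hve'⟩ := (hT.2.2.2.1 v x).exists_mem_ends hvx
  have hne : e ≠ e' := fun h => Set.disjoint_left.mp hT.2.1 he (h ▸ he')
  rcases hv e hve with rfl | rfl <;> rcases hv e' hve' with rfl | rfl
  exacts [absurd rfl hne, ⟨T1, T2, hT, he, he'⟩, ⟨T2, T1, hT.symm, he', he⟩, absurd rfl hne]

lemma exists_balanced_deleteVertex {c n m : ℕ} {G : Multigraph (Fin n) (Fin m)}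
    (hmin : ∀ (n' m' : ℕ) (G' : Multigraph (Fin n') (Fin m')),
      G'.IsDoubleTree → G'.NoBalancedDTD c → n ≤ n')
    (hG : G.IsDoubleTree) {v x y : Fin n} {a b : Fin m} (ha : G.ends a = s(v, x))
    (hb : G.ends b = s(v, y)) (hv : ∀ e, v ∈ G.ends e → e = a ∨ e = b) :
    ∃ S1 S2, (G.deleteVertex v).IsDTD S1 S2 ∧ (G.deleteVertex v).Balanced c S1 S2 := by
  obtain ⟨T1, T2, hT, haT, hbT⟩ := hG.exists_isDTD_mem_mem (ne_of_ends ha) hv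
  refine exists_balanced_of_card_lt hmin ⟨_, _, hT.deleteVertex ha hb haT hbT hv⟩ ?_
  simpa using Fintype.card_subtype_lt (p := (· ≠ v)) (x := v) (by simp)

end TwoVertex

section Imbalance

variable {c : ℕ} {S T : Set E} {v x y : V} {a b : E}

noncomputable def imbalance (G : Multigraph V E) (S T : Set E) (u : V) : ℤ :=
  G.deg S u - G.deg T u

lemma balanced_insert_insert [Finite E] (hS : ∀ e ∈ S, v ∉ G.ends e)
    (hT : ∀ e ∈ T, v ∉ G.ends e) (ha : G.ends a = s(v, x)) (hb : G.ends b = s(v, y))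
    (hxy : x ≠ y) (hB : G.Balanced c S T) (hx : |G.imbalance S T x + 1| ≤ c)
    (hy : |G.imbalance S T y - 1| ≤ c) : G.Balanced c (insert a S) (insert b T) := by
  have haS : a ∉ S := fun h => hS a h (ha ▸ Sym2.mem_mk_left v x)
  have hbT : b ∉ T := fun h => hT b h (hb ▸ Sym2.mem_mk_left v y)
  intro u
  by_cases huv : u = v
  · subst huv
    rw [deg_insert_of_mem haS (ha ▸ Sym2.mem_mk_left _ _),
      deg_insert_of_mem hbT (hb ▸ Sym2.mem_mk_left _ _)]
    simpa using hB u
  have hua : u ∈ G.ends a ↔ u = x := by simp [ha, huv]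
  have hub : u ∈ G.ends b ↔ u = y := by simp [hb, huv]
  by_cases hux : u = x
  · subst hux
    rw [deg_insert_of_mem haS (hua.mpr rfl), deg_insert_of_notMem (hub.not.mpr hxy)]
    simpa [imbalance, add_sub_right_comm] using hx
  by_cases huy : u = y
  · subst huy
    rw [deg_insert_of_notMem (hua.not.mpr hux), deg_insert_of_mem hbT (hub.mpr rfl)]
    simpa [imbalance, sub_add_eq_sub_sub] using hy
  rw [deg_insert_of_notMem (hua.not.mpr hux), deg_insert_of_notMem (hub.not.mpr huy)]
  exact hB u

lemma Balanced.insert_insert_of_ends_eq [Finite E] (hB : G.Balanced c S T) (haS : a ∉ S)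
    (hbT : b ∉ T) (hab : G.ends a = G.ends b) : G.Balanced c (insert a S) (insert b T) := by
  intro u
  by_cases hu : u ∈ G.ends a
  · rw [deg_insert_of_mem haS hu, deg_insert_of_mem hbT (hab ▸ hu)]
    simpa using hB u
  · rw [deg_insert_of_notMem hu, deg_insert_of_notMem (hab ▸ hu)]
    exact hB u

/-- If `|imbalance x| < c`, then depending on the sign of the imbalance at `y` one of the two
ways of adding `a` and `b` keeps the decomposition balanced. -/
lemma abs_imbalance_eq_of_not_balanced [Finite E] (hc : 1 ≤ c) (hS : ∀ e ∈ S, v ∉ G.ends e)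
    (hT : ∀ e ∈ T, v ∉ G.ends e) (ha : G.ends a = s(v, x)) (hb : G.ends b = s(v, y))
    (hxy : x ≠ y) (hB : G.Balanced c S T)
    (hab : ¬ G.Balanced c (insert a S) (insert b T))
    (hba : ¬ G.Balanced c (insert b S) (insert a T)) :
    |G.imbalance S T x| = c := by
  have hx : |G.imbalance S T x| ≤ c := hB x
  have hy : |G.imbalance S T y| ≤ c := hB y
  by_contra hne
  have hlt := lt_of_le_of_ne hx hne
  rw [abs_lt] at hlt
  rw [abs_le] at hy
  rcases le_or_gt 0 (G.imbalance S T y) with hy0 | hy0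
  · exact hab (balanced_insert_insert hS hT ha hb hxy hB
      (abs_le.mpr ⟨by omega, by omega⟩) (abs_le.mpr ⟨by omega, by omega⟩))
  · exact hba (balanced_insert_insert hS hT hb ha hxy.symm hB
      (abs_le.mpr ⟨by omega, by omega⟩) (abs_le.mpr ⟨by omega, by omega⟩))

lemma big_and_parity_of_abs_imbalance_eq {u : V}
    (hdeg : G.deg Set.univ u = G.deg S u + G.deg T u + 1) (hS : 1 ≤ G.deg S u)
    (hT : 1 ≤ G.deg T u) (h : |G.imbalance S T u| = c) :
    G.Big c u ∧ G.deg Set.univ u % 2 = (c + 1) % 2 := by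
  unfold Big
  unfold imbalance at h
  rw [hdeg]
  rcases abs_eq (Int.natCast_nonneg c) |>.mp h with h | h <;> omega

end Imbalance

section Neighbours

variable [Finite E] {c : ℕ} {v x y : V} {a b : E} {S1 S2 : Set {e // v ∉ G.ends e}}

lemma ne_of_noBalancedDTD (hbal : G.NoBalancedDTD c) (hS : (G.deleteVertex v).IsDTD S1 S2)
    (hB : (G.deleteVertex v).Balanced c S1 S2) (hab : a ≠ b)
    (hv : ∀ e, v ∈ G.ends e → e = a ∨ e = b) (ha : G.ends a = s(v, x))
    (hb : G.ends b = s(v, y)) : x ≠ y := by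
  rintro rfl
  refine hbal ⟨_, _, hS.insert_image_val hab hv ha hb,
    hB.image_val.insert_insert_of_ends_eq ?_ ?_ (ha.trans hb.symm)⟩
  exacts [fun h => notMem_ends_of_mem_image_val h (ha ▸ Sym2.mem_mk_left v x),
    fun h => notMem_ends_of_mem_image_val h (hb ▸ Sym2.mem_mk_left v x)]

lemma big_and_parity_of_noBalancedDTD (hc : 1 ≤ c) (hbal : G.NoBalancedDTD c)
    (hS : (G.deleteVertex v).IsDTD S1 S2) (hB : (G.deleteVertex v).Balanced c S1 S2)
    (hab : a ≠ b) (hv : ∀ e, v ∈ G.ends e → e = a ∨ e = b) (ha : G.ends a = s(v, x))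
    (hb : G.ends b = s(v, y)) (hxy : x ≠ y) :
    G.Big c x ∧ G.deg Set.univ x % 2 = (c + 1) % 2 := by
  have hvx := ne_of_ends ha
  have hdtd := hS.insert_image_val hab hv ha hb
  have habs := abs_imbalance_eq_of_not_balanced hc (fun _ => notMem_ends_of_mem_image_val)
    (fun _ => notMem_ends_of_mem_image_val) ha hb hxy hB.image_val
    (fun h => hbal ⟨_, _, hdtd, h⟩)
    (fun h => hbal ⟨_, _, hS.insert_image_val hab.symm (fun e he => (hv e he).symm) hb ha, h⟩)
  have hpos : ∀ S, (G.deleteVertex v).IsSpanningTree S → 1 ≤ G.deg (Subtype.val '' S) x :=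
    fun S hT => deg_image_val S ⟨x, hvx.symm⟩ ▸
      one_le_deg (hT.1 ⟨x, hvx.symm⟩ ⟨y, (ne_of_ends hb).symm⟩) (by simpa using hxy)
  refine big_and_parity_of_abs_imbalance_eq ?_ (hpos _ hS.2.2.1) (hpos _ hS.2.2.2) habs
  rw [← hdtd.deg_add_deg, deg_insert_of_mem (fun h => notMem_ends_of_mem_image_val h
      (ha ▸ Sym2.mem_mk_left v x)) (ha ▸ Sym2.mem_mk_right v x),
    deg_insert_of_notMem (by simp [hb, hvx.symm, hxy])]
  ring

end Neighbours

end Multigraph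

/-- **Theorem (Statement 6).** In a vertex-minimal double tree `G` with no
`c`-balanced double tree decomposition (`c ≥ 2`), the two neighbours `x`, `y`
of any 2-vertex `v` are distinct, big, and have degrees `≡ c + 1 (mod 2)`. -/
theorem two_vertex_neighbours (c : ℕ) (hc : 2 ≤ c) (n m : ℕ)
    (G : Multigraph (Fin n) (Fin m))
    (hG : G.IsDoubleTree) (hbal : G.NoBalancedDTD c)
    (hmin : ∀ (n' m' : ℕ) (G' : Multigraph (Fin n') (Fin m')),
      G'.IsDoubleTree → G'.NoBalancedDTD c → n ≤ n')
    (v x y : Fin n) (e1 e2 : Fin m) (he : e1 ≠ e2)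
    (h1 : G.ends e1 = s(v, x)) (h2 : G.ends e2 = s(v, y))
    (hdeg : G.deg Set.univ v = 2) :
    x ≠ y ∧ G.Big c x ∧ G.Big c y ∧
      G.deg Set.univ x % 2 = (c + 1) % 2 ∧
      G.deg Set.univ y % 2 = (c + 1) % 2 := by
  have hv : ∀ e, v ∈ G.ends e → e = e1 ∨ e = e2 := fun _ =>
    Multigraph.eq_or_eq_of_deg_eq_two he h1 h2 hdeg
  have hv' : ∀ e, v ∈ G.ends e → e = e2 ∨ e = e1 := fun e hve => (hv e hve).symm
  obtain ⟨S1, S2, hS, hB⟩ := Multigraph.exists_balanced_deleteVertex hmin hG h1 h2 hv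
  have hxy : x ≠ y := Multigraph.ne_of_noBalancedDTD hbal hS hB he hv h1 h2
  obtain ⟨hbx, hpx⟩ :=
    Multigraph.big_and_parity_of_noBalancedDTD (by omega) hbal hS hB he hv h1 h2 hxy
  obtain ⟨hby, hpy⟩ :=
    Multigraph.big_and_parity_of_noBalancedDTD (by omega) hbal hS hB he.symm hv' h2 h1 hxy.symm
  exact ⟨hxy, hbx, hby, hpx, hpy⟩
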